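/- arXiv:math/0611700 — 4 statements merged into one kernel-verified Lean document; each statement's English description precedes it below -/
import Mathlib

section
/- Let p be an odd prime and let x, y ∈ ℚ_p satisfy y² = (x² − 3)(x − 2) with x ≠ 0, y ≠ 0, and x ≠ 2. Then the p-adic valuation v_p(x − 2) is even. -/
private lemma pv_neg {p : ℕ} [Fact p.Prime] (x : ℚ_[p]) :
    (-x).valuation = x.valuation := by
  rcases eq_or_ne x 0 with rfl | hx
  · simp
  · have h1 : ((-1 : ℤ) : ℚ_[p]).valuation = 0 := by
      rw [Padic.valuation_intCast]
      simp [padicValInt]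
    have : (-x) = ((-1 : ℤ) : ℚ_[p]) * x := by push_cast; ring
    rw [this, Padic.valuation_mul (by simp) hx, h1, zero_add]

private lemma pv_add_eq {p : ℕ} [Fact p.Prime] {x y : ℚ_[p]} (hx : x ≠ 0)
    (hlt : x.valuation < y.valuation) : (x + y).valuation = x.valuation := by
  rcases eq_or_ne y 0 with rfl | hy
  · simp
  have hxy : x + y ≠ 0 := by
    intro h0
    have : y = -x := by linear_combination h0
    rw [this, pv_neg] at hlt
    exact lt_irrefl _ hlt
  have h1 : x.valuation ≤ (x + y).valuation := by
    have := Padic.le_valuation_add (x := x) (y := y) hxy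
    omega
  have h2 : (x + y).valuation ≤ x.valuation := by
    by_contra hc
    push_neg at hc
    have hx' : x = (x + y) + (-y) := by ring
    have := Padic.le_valuation_add (x := x + y) (y := -y) (by rw [← hx']; exact hx)
    rw [← hx', pv_neg] at this
    omega
  omega

/-- Let `p` be an odd prime and `x, y ∈ ℚ_p` with `y² = (x² − 3)(x − 2)`, `x ≠ 0`,
`y ≠ 0`, `x ≠ 2`. Then the `p`-adic valuation of `x − 2` is even. -/
theorem stmt9 (p : ℕ) [Fact p.Prime] (hp : p ≠ 2) (x y : ℚ_[p])
    (h : y ^ 2 = (x ^ 2 - 3) * (x - 2)) (hx0 : x ≠ 0) (hy : y ≠ 0) (hx2 : x ≠ 2) :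
    Even (x - 2).valuation := by
  have hprime := Fact.out (p := p.Prime)
  have hx2' : x - 2 ≠ 0 := sub_ne_zero.mpr hx2
  have hq : x ^ 2 - 3 ≠ 0 := by
    intro h0
    apply hy
    have : y ^ 2 = 0 := by rw [h, h0, zero_mul]
    exact pow_eq_zero_iff (n := 2) (by norm_num) |>.mp this
  -- valuation of 2 is 0
  have hv2 : ((2 : ℚ_[p])).valuation = 0 := by
    have hnd : ¬ p ∣ 2 := by
      intro hd
      have h1 := Nat.le_of_dvd (by norm_num) hd
      have h2 := hprime.two_le
      omega
    rw [show ((2 : ℚ_[p])) = ((2 : ℕ) : ℚ_[p]) by norm_num, Padic.valuation_natCast,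
      padicValNat.eq_zero_of_not_dvd hnd]
    simp
  have hv3 : (0 : ℤ) ≤ ((3 : ℚ_[p])).valuation := by
    rw [show ((3 : ℚ_[p])) = ((3 : ℕ) : ℚ_[p]) by norm_num, Padic.valuation_natCast]
    positivity
  -- key equation on valuations
  have hvy : 2 * y.valuation = (x ^ 2 - 3).valuation + (x - 2).valuation := by
    have : (y ^ 2).valuation = ((x ^ 2 - 3) * (x - 2)).valuation := by rw [h]
    rw [Padic.valuation_mul hq hx2', pow_two,
      Padic.valuation_mul hy hy] at this
    omega
  have hvx2 : (x ^ 2).valuation = 2 * x.valuation := by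
    rw [pow_two, Padic.valuation_mul hx0 hx0]; omega
  rcases lt_or_ge x.valuation 0 with hneg | hpos
  · -- v(x) < 0
    have ha : (x - 2).valuation = x.valuation := by
      rw [sub_eq_add_neg, pv_add_eq hx0 (by rw [pv_neg, hv2]; exact hneg)]
    have hb : (x ^ 2 - 3).valuation = 2 * x.valuation := by
      rw [sub_eq_add_neg, pv_add_eq (pow_ne_zero 2 hx0) (by rw [pv_neg, hvx2]; omega), hvx2]
    rw [ha]
    rw [ha, hb] at hvy
    exact ⟨y.valuation - x.valuation, by omega⟩
  · -- v(x) ≥ 0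
    have ha0 : 0 ≤ (x - 2).valuation := by
      have := Padic.le_valuation_add (x := x) (y := -2) (by rw [← sub_eq_add_neg]; exact hx2')
      rw [pv_neg, hv2, ← sub_eq_add_neg] at this
      omega
    rcases eq_or_lt_of_le ha0 with heq | hlt
    · exact ⟨0, by omega⟩
    · -- v(x-2) > 0, show v(x²-3) = 0
      have hid : x ^ 2 - 3 = 1 + (x - 2) * (x + 2) := by ring
      have hb : (x ^ 2 - 3).valuation = 0 := by
        rcases eq_or_ne (x + 2) 0 with h2 | h2
        · rw [hid, h2, mul_zero, add_zero, Padic.valuation_one]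
        · have hvp : 0 < ((x - 2) * (x + 2)).valuation := by
            rw [Padic.valuation_mul hx2' h2]
            have : 0 ≤ (x + 2).valuation := by
              have := Padic.le_valuation_add (x := x) (y := 2) h2
              rw [hv2] at this
              omega
            omega
          rw [hid, pv_add_eq one_ne_zero (by rw [Padic.valuation_one]; exact hvp),
            Padic.valuation_one]
      rw [hb, zero_add] at hvy
      exact ⟨y.valuation, by omega⟩
end

section
/- Let x, y ∈ ℚ_2 satisfy y² = (x² − 3)(x − 2) with y ≠ 0 and x ∉ {0, 2}. Then x − 2 is a sum of two squares in ℚ_2. -/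
lemma norm_two : ‖(2:ℚ_[2])‖ = 1/2 := by
  rw [show ((2:ℚ_[2])) = ((2:ℕ):ℚ_[2]) by norm_num, Padic.norm_p]; norm_num

-- dichotomy
lemma two_dvd_or (Z : ℤ_[2]) : (2:ℤ_[2]) ∣ Z ∨ (2:ℤ_[2]) ∣ (Z - 1) := by
  have h2 : ∀ a : ZMod 2, a = 0 ∨ a = 1 := by decide
  have key : ∀ W : ℤ_[2], PadicInt.toZMod W = 0 → (2:ℤ_[2]) ∣ W := by
    intro W hW
    have : W ∈ RingHom.ker (PadicInt.toZMod : ℤ_[2] →+* ZMod 2) := hW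
    rw [PadicInt.ker_toZMod, PadicInt.maximalIdeal_eq_span_p, Ideal.mem_span_singleton] at this
    exact_mod_cast this
  rcases h2 (PadicInt.toZMod Z) with h | h
  · exact Or.inl (key Z h)
  · refine Or.inr (key _ ?_)
    simp [map_sub, h]

lemma norm_dichotomy (z : ℚ_[2]) (hz : ‖z‖ ≤ 1) : ‖z‖ ≤ 1/2 ∨ ‖z - 1‖ ≤ 1/2 := by
  set Z : ℤ_[2] := ⟨z, hz⟩ with hZ
  rcases two_dvd_or Z with ⟨c, hc⟩ | ⟨c, hc⟩
  · left
    have : z = (2:ℚ_[2]) * (c : ℚ_[2]) := by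
      have := congrArg (fun w : ℤ_[2] => (w : ℚ_[2])) hc
      push_cast at this
      simpa [hZ, show ((2:ℤ_[2]) : ℚ_[2]) = 2 by norm_cast] using this
    rw [this, norm_mul, norm_two]
    have := c.2
    nlinarith [norm_nonneg (c : ℚ_[2])]
  · right
    have : z - 1 = (2:ℚ_[2]) * (c : ℚ_[2]) := by
      have := congrArg (fun w : ℤ_[2] => (w : ℚ_[2])) hc
      push_cast at this
      simpa [hZ, show ((2:ℤ_[2]) : ℚ_[2]) = 2 by norm_cast] using this
    rw [this, norm_mul, norm_two]
    have := c.2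
    nlinarith [norm_nonneg (c : ℚ_[2])]

-- squares: ‖w-1‖ ≤ 1/8 → square
lemma sq_of_close (w : ℚ_[2]) (hw : ‖w - 1‖ ≤ 1/8) : ∃ s : ℚ_[2], w = s ^ 2 := by
  have hwle : ‖w‖ ≤ 1 := by
    have h : w = (w - 1) + 1 := by ring
    rw [h]
    calc ‖(w-1)+1‖ ≤ max ‖w-1‖ ‖(1:ℚ_[2])‖ := Padic.nonarchimedean _ _
    _ ≤ 1 := by rw [norm_one]; apply max_le <;> linarith
  set W : ℤ_[2] := ⟨w, hwle⟩ with hW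
  have hnorm : ‖(Polynomial.X ^ 2 - Polynomial.C W : Polynomial ℤ_[2]).eval 1‖ <
      ‖(Polynomial.X ^ 2 - Polynomial.C W : Polynomial ℤ_[2]).derivative.eval 1‖ ^ 2 := by
    have h1 : (Polynomial.X ^ 2 - Polynomial.C W : Polynomial ℤ_[2]).eval 1 = 1 - W := by
      simp
    have h2 : (Polynomial.X ^ 2 - Polynomial.C W : Polynomial ℤ_[2]).derivative.eval 1 = 2 := by
      simp [Polynomial.derivative_sub, Polynomial.derivative_pow]
    rw [h1, h2]
    have hn1 : ‖(1 - W : ℤ_[2])‖ = ‖w - 1‖ := by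
      rw [PadicInt.norm_def]
      push_cast
      rw [show ((1:ℚ_[2]) - w) = -(w - 1) by ring, norm_neg]
    have hn2 : ‖(2:ℤ_[2])‖ = 1/2 := by
      rw [PadicInt.norm_def]; push_cast; exact norm_two
    rw [hn1, hn2]
    nlinarith
  obtain ⟨z, hz, -⟩ := hensels_lemma hnorm
  refine ⟨(z : ℚ_[2]), ?_⟩
  have h3 : z ^ 2 = W := by
    simpa [sub_eq_zero] using hz
  have := congrArg (fun w : ℤ_[2] => (w : ℚ_[2])) h3
  push_cast at this
  exact this.symm

-- sum of two squares: ‖u-1‖ ≤ 1/4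
lemma sum_two_sq (u : ℚ_[2]) (hu : ‖u - 1‖ ≤ 1/4) : ∃ a b : ℚ_[2], u = a ^ 2 + b ^ 2 := by
  have h4 : ‖(4:ℚ_[2])‖ = 1/4 := by
    rw [show (4:ℚ_[2]) = 2^2 by norm_num, norm_pow, norm_two]; norm_num
  set t : ℚ_[2] := (u - 1) / 4 with ht
  have ht1 : ‖t‖ ≤ 1 := by
    rw [ht, norm_div, h4]
    rw [div_le_one (by norm_num)]
    linarith
  have hut : u - 1 = 4 * t := by
    rw [ht]; field_simp
  rcases norm_dichotomy t ht1 with hcase | hcase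
  · have h8 : ‖u - 1‖ ≤ 1/8 := by
      rw [hut, norm_mul, h4]
      nlinarith [norm_nonneg t]
    obtain ⟨s, hs⟩ := sq_of_close u h8
    exact ⟨s, 0, by rw [hs]; ring⟩
  · have h5 : ‖(5:ℚ_[2])‖ = 1 := by
      rw [show (5:ℚ_[2]) = 1 + 4 by norm_num, Padic.add_eq_max_of_ne]
      · rw [norm_one, h4]; norm_num
      · rw [norm_one, h4]; norm_num
    have hclose : ‖u / 5 - 1‖ ≤ 1/8 := by
      have he : u / 5 - 1 = (u - 5) / 5 := by field_simp
      have he2 : u - 5 = 4 * (t - 1) := by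
        have : u - 5 = (u - 1) - 4 := by ring
        rw [this, hut]; ring
      rw [he, norm_div, h5, div_one, he2, norm_mul, h4]
      nlinarith [norm_nonneg (t-1)]
    obtain ⟨s, hs⟩ := sq_of_close (u/5) hclose
    refine ⟨s, 2*s, ?_⟩
    have : u = 5 * (u / 5) := by field_simp
    rw [this, hs]; ring

/-- Let `x, y ∈ ℚ₂` satisfy `y² = (x² − 3)(x − 2)` with `y ≠ 0` and `x ∉ {0, 2}`. Then
`x − 2` is a sum of two squares in `ℚ₂`. -/
theorem stmt11 (x y : ℚ_[2]) (h : y ^ 2 = (x ^ 2 - 3) * (x - 2))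
    (hy : y ≠ 0) (hx0 : x ≠ 0) (hx2 : x ≠ 2) :
    ∃ a b : ℚ_[2], x - 2 = a ^ 2 + b ^ 2 := by
  have h4 : ‖(4:ℚ_[2])‖ = 1/4 := by
    rw [show (4:ℚ_[2]) = 2^2 by norm_num, norm_pow, norm_two]; norm_num
  have hD : x ^ 2 - 3 ≠ 0 := by
    intro h0
    apply hy
    have : y ^ 2 = 0 := by rw [h, h0]; ring
    exact pow_eq_zero_iff (by norm_num) |>.mp this
  -- helper: from x²−3 = a²+b², get x−2 sum of two squares
  have transfer : (∃ a b : ℚ_[2], x ^ 2 - 3 = a ^ 2 + b ^ 2) →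
      ∃ a b : ℚ_[2], x - 2 = a ^ 2 + b ^ 2 := by
    rintro ⟨a, b, hab⟩
    refine ⟨y * a / (x ^ 2 - 3), y * b / (x ^ 2 - 3), ?_⟩
    have hx2' : x - 2 = y ^ 2 / (x ^ 2 - 3) := by
      field_simp
      linear_combination -h
    rw [hx2']
    field_simp
    linear_combination hab
  rcases lt_trichotomy ‖x‖ 1 with hlt | heq | hgt
  · -- ‖x‖ < 1, so ≤ 1/2
    have hx12 : ‖x‖ ≤ 1/2 := (norm_dichotomy x hlt.le).resolve_right (by
      intro hc
      have : ‖x - 1‖ = 1 := by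
        rw [show x - 1 = x + (-1) by ring, Padic.add_eq_max_of_ne]
        · simp; linarith
        · simp; linarith
      linarith)
    apply transfer
    apply sum_two_sq
    have : x ^ 2 - 3 - 1 = x ^ 2 - 4 := by ring
    rw [this]
    calc ‖x^2 - 4‖ = ‖x^2 + (-4)‖ := by ring_nf
    _ ≤ max ‖x^2‖ ‖(-4:ℚ_[2])‖ := Padic.nonarchimedean _ _
    _ ≤ 1/4 := by
        apply max_le
        · rw [norm_pow]; nlinarith [norm_nonneg x]
        · rw [norm_neg, h4]
  · -- ‖x‖ = 1 : contradiction
    exfalso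
    -- x² ≡ 1 mod 8
    have hxm1 : ‖x - 1‖ ≤ 1/2 := by
      rcases norm_dichotomy x heq.le with hc | hc
      · linarith
      · exact hc
    set t : ℚ_[2] := (x - 1) / 2 with htdef
    have ht1 : ‖t‖ ≤ 1 := by
      rw [htdef, norm_div, norm_two]
      rw [div_le_one (by norm_num)]
      linarith
    have hxt : x - 1 = 2 * t := by rw [htdef]; field_simp
    have hx1 : x + 1 = 2 * (t + 1) := by rw [show x + 1 = (x-1) + 2 by ring, hxt]; ring
    have hsq : ‖x ^ 2 - 1‖ ≤ 1/8 := by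
      have hfac : x ^ 2 - 1 = (2 * t) * (2 * (t + 1)) := by
        rw [← hxt, ← hx1]; ring
      rw [hfac, norm_mul, norm_mul, norm_mul, norm_two]
      rcases norm_dichotomy t ht1 with hc | hc
      · have htp1 : ‖t + 1‖ ≤ 1 := by
          calc ‖t + 1‖ ≤ max ‖t‖ ‖(1:ℚ_[2])‖ := Padic.nonarchimedean _ _
          _ ≤ 1 := by rw [norm_one]; apply max_le <;> linarith
        nlinarith [norm_nonneg (t+1), norm_nonneg t]
      · have : ‖t + 1‖ ≤ 1/2 := by
          have he : t + 1 = (t - 1) + 2 := by ring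
          rw [he]
          calc ‖(t-1)+2‖ ≤ max ‖t-1‖ ‖(2:ℚ_[2])‖ := Padic.nonarchimedean _ _
          _ ≤ 1/2 := by rw [norm_two]; apply max_le <;> linarith
        nlinarith [norm_nonneg t]
    have hD2 : ‖x ^ 2 - 3‖ = 1/2 := by
      have he : x ^ 2 - 3 = (x ^ 2 - 1) + (-2) := by ring
      rw [he, Padic.add_eq_max_of_ne]
      · rw [norm_neg, norm_two]; rw [max_eq_right]; linarith
      · rw [norm_neg, norm_two]; intro hc; rw [hc] at hsq; linarith
    have hx2n : ‖x - 2‖ = 1 := by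
      rw [show x - 2 = x + (-2) by ring, Padic.add_eq_max_of_ne]
      · rw [heq, norm_neg, norm_two]; norm_num
      · rw [heq, norm_neg, norm_two]; norm_num
    have hyn : ‖y‖ ^ 2 = 1/2 := by
      rw [← norm_pow, h, norm_mul, hD2, hx2n]; ring
    -- but ‖y‖ = 2^(-val)
    have hv := Padic.norm_eq_zpow_neg_valuation hy
    push_cast at hv
    rw [hv] at hyn
    rw [← zpow_natCast, ← zpow_mul] at hyn
    have h12 : (1/2 : ℝ) = (2:ℝ) ^ (-1 : ℤ) := by norm_num
    rw [h12] at hyn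
    have := zpow_right_injective₀ (by norm_num : (0:ℝ) < 2) (by norm_num : (2:ℝ) ≠ 1) hyn
    omega
  · -- ‖x‖ > 1
    apply transfer
    have hx4 : ‖x‖ ≥ 2 := by
      by_contra hc
      push_neg at hc
      -- norms are powers of 2; if 1 < ‖x‖ < 2 impossible
      have hv := Padic.norm_eq_zpow_neg_valuation hx0
      push_cast at hv
      rw [hv] at hgt hc
      rcases le_or_gt 0 x.valuation with h0 | h0
      · have hle : (2:ℝ) ^ (-x.valuation) ≤ 2 ^ (0:ℤ) :=
          zpow_le_zpow_right₀ one_le_two (by omega)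
        rw [zpow_zero] at hle; linarith
      · have hle : (2:ℝ) ^ (1:ℤ) ≤ 2 ^ (-x.valuation) :=
          zpow_le_zpow_right₀ one_le_two (by omega)
        rw [zpow_one] at hle; linarith
    have h3n : ‖(3:ℚ_[2])‖ = 1 := by
      rw [show (3:ℚ_[2]) = 1 + 2 by norm_num, Padic.add_eq_max_of_ne]
      · rw [norm_one, norm_two]; norm_num
      · rw [norm_one, norm_two]; norm_num
    obtain ⟨a, b, hab⟩ := sum_two_sq (1 - 3 / x ^ 2) (by
      have he : 1 - 3 / x ^ 2 - 1 = -(3 / x ^ 2) := by ring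
      rw [he, norm_neg, norm_div, h3n, norm_pow]
      rw [div_le_iff₀ (by positivity)]
      nlinarith)
    refine ⟨x * a, x * b, ?_⟩
    have hfac : x ^ 2 - 3 = x ^ 2 * (1 - 3 / x ^ 2) := by field_simp
    rw [hfac, hab]; ring
end

section
/- For every prime p and all x, y ∈ ℚ_p with y² = (x² − 3)(x − 2), y ≠ 0, and x ∉ {0, 2}, the element x − 2 is a sum of two squares in ℚ_p. -/
open Polynomial

lemma padicint_sq_of_close (p : ℕ) [Fact p.Prime] (u : ℤ_[p])
    (hu : ‖u - 1‖ < ‖(2 : ℤ_[p])‖ ^ 2) : ∃ z : ℤ_[p], z ^ 2 = u := by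
  obtain ⟨z, hz, -⟩ := hensels_lemma (F := X ^ 2 - C u) (a := (1 : ℤ_[p])) (by
    simp only [Polynomial.eval_sub, Polynomial.eval_pow, Polynomial.eval_X, Polynomial.eval_C,
      Polynomial.derivative_sub, Polynomial.derivative_C, Polynomial.derivative_X_pow,
      sub_zero, Polynomial.eval_mul, Polynomial.eval_natCast, Polynomial.aeval_sub, Polynomial.aeval_add,
        Polynomial.aeval_mul, Polynomial.aeval_X_pow, Polynomial.aeval_C, Algebra.algebraMap_self,
        RingHom.id_apply]
    have : (1:ℤ_[p])^2 - u = -(u - 1) := by ring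
    rw [this, norm_neg]
    simpa using hu)
  refine ⟨z, ?_⟩
  simpa [sub_eq_zero] using hz

lemma mem_max_norm_lt {p : ℕ} [Fact p.Prime] {z : ℤ_[p]} :
    z ∈ IsLocalRing.maximalIdeal ℤ_[p] ↔ ‖z‖ < 1 := by
  rw [IsLocalRing.mem_maximalIdeal, ← PadicInt.mem_nonunits]

lemma padic_unit_sq_add_sq (p : ℕ) [Fact p.Prime] (hp : p ≠ 2) (u : ℤ_[p])
    (hu : ‖u‖ = 1) : ∃ a b : ℤ_[p], u = a ^ 2 + b ^ 2 := by
  obtain ⟨a, b, hab⟩ := ZMod.sq_add_sq p (PadicInt.toZMod u)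
  have hune : PadicInt.toZMod u ≠ 0 := by
    intro h0
    have : u ∈ IsLocalRing.maximalIdeal ℤ_[p] := by
      rw [← PadicInt.ker_toZMod] at *; exact h0
    rw [mem_max_norm_lt, hu] at this; exact lt_irrefl _ this
  have key : ∀ a b : ZMod p, a ^ 2 + b ^ 2 = PadicInt.toZMod u → a ≠ 0 →
      ∃ A B : ℤ_[p], u = A ^ 2 + B ^ 2 := by
    intro a b hab ha
    set A : ℤ_[p] := (a.val : ℤ_[p]) with hA
    set B : ℤ_[p] := (b.val : ℤ_[p]) with hB
    have htA : PadicInt.toZMod A = a := by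
      rw [hA, map_natCast]; exact ZMod.natCast_rightInverse a
    have htB : PadicInt.toZMod B = b := by
      rw [hB, map_natCast]; exact ZMod.natCast_rightInverse b
    have hAnorm : ‖A‖ = 1 := by
      refine le_antisymm (PadicInt.norm_le_one A) ?_
      by_contra hlt
      push_neg at hlt
      have : A ∈ IsLocalRing.maximalIdeal ℤ_[p] := mem_max_norm_lt.2 hlt
      rw [← PadicInt.ker_toZMod] at this
      exact ha (by rwa [RingHom.mem_ker, htA] at this)
    have h2 : ‖(2 : ℤ_[p])‖ = 1 := by
      refine le_antisymm (PadicInt.norm_le_one _) ?_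
      by_contra hlt
      push_neg at hlt
      have : ((2:ℤ) : ℤ_[p]) = (2 : ℤ_[p]) := by norm_num
      rw [← this] at hlt
      have := (PadicInt.norm_int_lt_one_iff_dvd 2).1 hlt
      have hle : (p : ℤ) ≤ 2 := Int.le_of_dvd (by norm_num) this
      have h2le : 2 ≤ p := (Fact.out : p.Prime).two_le
      omega
    obtain ⟨z, hz, -⟩ := hensels_lemma (F := X ^ 2 + C (B ^ 2 - u)) (a := A) (by
      simp only [Polynomial.eval_add, Polynomial.eval_pow, Polynomial.eval_X, Polynomial.eval_C,
        Polynomial.derivative_add, Polynomial.derivative_C, Polynomial.derivative_X_pow,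
        add_zero, Polynomial.eval_mul, Polynomial.eval_natCast, Polynomial.aeval_sub, Polynomial.aeval_add,
        Polynomial.aeval_mul, Polynomial.aeval_X_pow, Polynomial.aeval_C, Algebra.algebraMap_self,
        RingHom.id_apply]
      have hn : ‖A ^ 2 + (B ^ 2 - u)‖ < 1 := by
        rw [← mem_max_norm_lt, ← PadicInt.ker_toZMod, RingHom.mem_ker]
        push_cast [map_add, map_sub, map_pow, htA, htB]
        linear_combination hab
      have e : ((2:ℕ):ℤ_[p]) * A ^ (2-1) = 2 * A := by push_cast; ring
      rw [e, norm_mul, h2, hAnorm]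
      simpa using hn)
    refine ⟨z, B, ?_⟩
    have : z ^ 2 + (B ^ 2 - u) = 0 := by simpa using hz
    linear_combination -this
  by_cases ha : a ≠ 0
  · exact key a b hab ha
  · push_neg at ha
    have hb : b ≠ 0 := by
      intro hb; rw [ha, hb] at hab; simp at hab; exact hune hab.symm
    exact key b a (by rw [← hab, ha]; ring) hb

lemma val_eq_of_norm_eq {p : ℕ} [Fact p.Prime] {a b : ℚ_[p]} (ha : a ≠ 0) (hb : b ≠ 0)
    (h : ‖a‖ = ‖b‖) : a.valuation = b.valuation := by
  rw [Padic.norm_eq_zpow_neg_valuation ha, Padic.norm_eq_zpow_neg_valuation hb] at h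
  have hp1 : (1:ℝ) < p := by exact_mod_cast (Fact.out : p.Prime).one_lt
  have := zpow_right_injective₀ (by positivity) (ne_of_gt hp1) h
  omega

lemma val_add_eq {p : ℕ} [Fact p.Prime] {a : ℚ_[p]} (b : ℚ_[p]) (ha : a ≠ 0)
    (hlt : ‖b‖ < ‖a‖) : (a + b).valuation = a.valuation := by
  have hmax : ‖a + b‖ = ‖a‖ := by
    rw [Padic.add_eq_max_of_ne (ne_of_gt hlt)]
    exact max_eq_left hlt.le
  have hab : a + b ≠ 0 := by
    intro h0; rw [h0, norm_zero] at hmax; exact ha (norm_eq_zero.1 hmax.symm)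
  exact val_eq_of_norm_eq hab ha hmax

lemma zmod2_eq_one (c : ZMod 2) (hc : c ≠ 0) : c = 1 := by revert c; decide

lemma q2_sq {z : ℚ_[2]} (h : ‖z - 1‖ < 1/4) : ∃ r : ℚ_[2], z = r ^ 2 := by
  have hz1 : ‖z‖ ≤ 1 := by
    have : z = 1 + (z - 1) := by ring
    rw [this]
    refine le_trans (Padic.nonarchimedean _ _) ?_
    simp only [norm_one]
    exact max_le le_rfl (by linarith)
  set Z : ℤ_[2] := ⟨z, hz1⟩ with hZ
  have hnorm2 : ‖(2 : ℤ_[2])‖ = 1/2 := by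
    have := @PadicInt.norm_p 2 _
    norm_num at this ⊢
    exact_mod_cast this
  have hcoe : ‖Z - 1‖ = ‖z - 1‖ := by
    rw [PadicInt.norm_def, PadicInt.coe_sub, PadicInt.coe_one]
  obtain ⟨w, hw⟩ := padicint_sq_of_close 2 Z (by rw [hcoe, hnorm2]; norm_num; linarith)
  refine ⟨(w : ℚ_[2]), ?_⟩
  have := congrArg (fun z : ℤ_[2] => (z : ℚ_[2])) hw
  simp only [PadicInt.coe_pow] at this
  exact this.symm

/-- For every prime `p` and all `x, y ∈ ℚ_p` with `y² = (x² − 3)(x − 2)`, `y ≠ 0`, and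
`x ∉ {0, 2}`, the element `x − 2` is a sum of two squares in `ℚ_p`. -/
theorem stmt12 (p : ℕ) [Fact p.Prime] (x y : ℚ_[p])
    (h : y ^ 2 = (x ^ 2 - 3) * (x - 2)) (hy : y ≠ 0) (hx0 : x ≠ 0) (hx2 : x ≠ 2) :
    ∃ a b : ℚ_[p], x - 2 = a ^ 2 + b ^ 2 := by
  set t := x - 2 with htdef
  have ht0 : t ≠ 0 := sub_ne_zero.2 hx2
  have hst : y ^ 2 = (t ^ 2 + 4 * t + 1) * t := by rw [htdef]; linear_combination h
  set s := t ^ 2 + 4 * t + 1 with hsdef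
  have hs0 : s ≠ 0 := by
    intro h0
    rw [h0, zero_mul] at hst
    exact hy (pow_eq_zero_iff two_ne_zero |>.1 hst)
  have hval : 2 * y.valuation = s.valuation + t.valuation := by
    have h1 : (s * t).valuation = s.valuation + t.valuation :=
      Padic.valuation_mul hs0 ht0
    have h2 : (y ^ 2).valuation = 2 * y.valuation := by
      rw [show y ^ 2 = y * y by ring, Padic.valuation_mul hy hy]; ring
    rw [← hst, h2] at h1
    exact h1
  by_cases hp2 : p = 2
  · subst hp2
    -- p = 2 : show t is a square
    suffices hsq : ∃ r : ℚ_[2], t = r ^ 2 by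
      obtain ⟨r, hr⟩ := hsq
      exact ⟨r, 0, by rw [hr]; ring⟩
    have h2n : ‖(2 : ℚ_[2])‖ = 1/2 := by
      have := @Padic.norm_p 2 _
      norm_num at this ⊢
      exact_mod_cast this
    have h4n : ‖(4 : ℚ_[2])‖ = 1/4 := by
      have e : (4 : ℚ_[2]) = 2 * 2 := by norm_num
      rw [e, norm_mul, h2n]; norm_num
    have hnt : ‖t‖ = (2:ℝ) ^ (-t.valuation) := by
      have := Padic.norm_eq_zpow_neg_valuation ht0
      rw [this]; norm_num
    have hcase : t.valuation ≤ -2 ∨ t.valuation = -1 ∨ t.valuation = 0 ∨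
        t.valuation = 1 ∨ 2 ≤ t.valuation := by omega
    rcases hcase with hv | hv | hv | hv | hv
    · -- ‖t‖ ≥ 4
      have htn : (4:ℝ) ≤ ‖t‖ := by
        rw [hnt]
        calc (4:ℝ) = 2 ^ (2:ℤ) := by norm_num
          _ ≤ 2 ^ (-t.valuation) := by
              apply zpow_le_zpow_right₀ one_le_two; omega
      have hti : ‖t⁻¹‖ ≤ 1/4 := by
        rw [norm_inv]
        rw [inv_le_comm₀ (by positivity) (by norm_num)]
        linarith
      set w : ℚ_[2] := 1 + 4 * t⁻¹ + t⁻¹ ^ 2 with hwdef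
      have hwb : ‖w - 1‖ ≤ 1/16 := by
        have e : w - 1 = 4 * t⁻¹ + t⁻¹ ^ 2 := by rw [hwdef]; ring
        rw [e]
        refine le_trans (Padic.nonarchimedean _ _) (max_le ?_ ?_)
        · rw [norm_mul, h4n]; nlinarith [norm_nonneg t⁻¹]
        · rw [norm_pow]; nlinarith [norm_nonneg t⁻¹]
      obtain ⟨r, hr⟩ := q2_sq (lt_of_le_of_lt hwb (by norm_num))
      have hw0 : w ≠ 0 := by
        intro h0; rw [h0] at hwb; norm_num at hwb
      have hr0 : r ≠ 0 := by
        intro h0; rw [h0] at hr; simp at hr; exact hw0 hr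
      have hsw : s = t ^ 2 * w := by
        rw [hsdef, hwdef]; field_simp
      refine ⟨y / (t * r), ?_⟩
      rw [div_pow, eq_div_iff (by exact pow_ne_zero 2 (mul_ne_zero ht0 hr0))]
      linear_combination -hst - t * hsw - t^3 * hr
    · -- v = -1 : contradiction
      exfalso
      have htn : ‖t‖ = 2 := by rw [hnt, hv]; norm_num
      have hb : ‖4 * t + 1‖ < ‖t ^ 2‖ := by
        rw [norm_pow, htn]
        refine lt_of_le_of_lt (Padic.nonarchimedean _ _) ?_
        rw [norm_mul, h4n, htn, norm_one]
        norm_num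
      have hvs : s.valuation = -2 := by
        have e : s = t ^ 2 + (4 * t + 1) := by rw [hsdef]; ring
        rw [e, val_add_eq _ (by exact pow_ne_zero 2 ht0) hb,
          show t ^ 2 = t * t by ring, Padic.valuation_mul ht0 ht0, hv]
        norm_num
      omega
    · -- v = 0 : contradiction
      exfalso
      have htn : ‖t‖ = 1 := by rw [hnt, hv]; norm_num
      set T : ℤ_[2] := ⟨t, htn.le⟩ with hT
      have hTne : PadicInt.toZMod T ≠ 0 := by
        intro h0
        have : T ∈ IsLocalRing.maximalIdeal ℤ_[2] := by
          rw [← PadicInt.ker_toZMod]; exact h0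
        rw [mem_max_norm_lt] at this
        rw [PadicInt.norm_def] at this
        simp only [hT] at this
        rw [htn] at this; exact lt_irrefl _ this
      have hT1 : PadicInt.toZMod T = 1 := zmod2_eq_one _ hTne
      have : (2 : ℤ_[2]) ∣ T - 1 := by
        rw [← Ideal.mem_span_singleton]
        have : T - 1 ∈ IsLocalRing.maximalIdeal ℤ_[2] := by
          rw [← PadicInt.ker_toZMod, RingHom.mem_ker, map_sub, map_one, hT1, sub_self]
        rwa [PadicInt.maximalIdeal_eq_span_p] at this
      obtain ⟨k, hk⟩ := this
      set K : ℚ_[2] := (k : ℚ_[2]) with hK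
      have hKn : ‖K‖ ≤ 1 := k.2
      have htK : t - 1 = 2 * K := by
        have := congrArg (fun z : ℤ_[2] => (z : ℚ_[2])) hk
        exact_mod_cast this
      have hsq1 : t ^ 2 + 1 = 2 * (1 + 2 * (K ^ 2 + K)) := by
        linear_combination (t + 1 + 2 * K) * htK
      have hunit : ‖1 + 2 * (K ^ 2 + K)‖ = 1 := by
        rw [add_comm, Padic.add_eq_max_of_ne, norm_one]
        · apply max_eq_right
          rw [norm_mul, h2n]
          refine le_trans (mul_le_of_le_one_right (by norm_num) ?_) (by norm_num)
          refine le_trans (Padic.nonarchimedean _ _) (max_le ?_ hKn)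
          rw [norm_pow]; exact pow_le_one₀ (norm_nonneg K) hKn
        · rw [norm_one]
          apply ne_of_lt
          rw [norm_mul, h2n]
          refine lt_of_le_of_lt (mul_le_of_le_one_right (by norm_num) ?_) (by norm_num)
          refine le_trans (Padic.nonarchimedean _ _) (max_le ?_ hKn)
          rw [norm_pow]; exact pow_le_one₀ (norm_nonneg K) hKn
      have hn21 : ‖t ^ 2 + 1‖ = 1/2 := by
        rw [hsq1, norm_mul, h2n, hunit, mul_one]
      have hvs : s.valuation = 1 := by
        have e : s = (t ^ 2 + 1) + 4 * t := by rw [hsdef]; ring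
        have ht21 : t ^ 2 + 1 ≠ 0 := by
          intro h0; rw [h0, norm_zero] at hn21; norm_num at hn21
        rw [e, val_add_eq _ ht21 (by rw [hn21, norm_mul, h4n, htn]; norm_num)]
        have h20 : (2 : ℚ_[2]) ≠ 0 := two_ne_zero
        have := val_eq_of_norm_eq ht21 h20 (by rw [hn21, h2n])
        rw [this]
        have : ((2:ℕ) : ℚ_[2]).valuation = 1 := Padic.valuation_p
        simpa using this
      omega
    · -- v = 1 : contradiction
      exfalso
      have htn : ‖t‖ = 1/2 := by rw [hnt, hv]; norm_num
      have hb : ‖t ^ 2 + 4 * t‖ < ‖(1 : ℚ_[2])‖ := by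
        rw [norm_one]
        refine lt_of_le_of_lt (Padic.nonarchimedean _ _) ?_
        rw [norm_pow, norm_mul, h4n, htn]
        norm_num
      have hvs : s.valuation = 0 := by
        have e : s = 1 + (t ^ 2 + 4 * t) := by rw [hsdef]; ring
        rw [e, val_add_eq _ one_ne_zero hb, Padic.valuation_one]
      omega
    · -- ‖t‖ ≤ 1/4
      have htn : ‖t‖ ≤ 1/4 := by
        rw [hnt]
        calc (2:ℝ) ^ (-t.valuation) ≤ 2 ^ (-2:ℤ) := by
              apply zpow_le_zpow_right₀ one_le_two; omega
          _ = 1/4 := by norm_num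
      have hsb : ‖s - 1‖ ≤ 1/16 := by
        have e : s - 1 = t * (t + 4) := by rw [hsdef]; ring
        rw [e, norm_mul]
        have h1 : ‖t + 4‖ ≤ 1/4 :=
          le_trans (Padic.nonarchimedean _ _) (max_le htn (by rw [h4n]))
        nlinarith [norm_nonneg t]
      obtain ⟨r, hr⟩ := q2_sq (lt_of_le_of_lt hsb (by norm_num))
      have hr0 : r ≠ 0 := by
        intro h0; rw [h0] at hr; simp at hr; exact hs0 hr
      refine ⟨y / r, ?_⟩
      rw [div_pow, eq_div_iff (by exact pow_ne_zero 2 hr0)]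
      linear_combination -hst - t * hr
  · -- p odd
    have hple : 2 ≤ p := (Fact.out : p.Prime).two_le
    have h2n : ‖(2 : ℚ_[p])‖ = 1 := by
      refine le_antisymm ?_ ?_
      · have := Padic.norm_int_le_one (p := p) 2
        simpa using this
      · by_contra hlt
        push_neg at hlt
        have h2 : ((2:ℤ) : ℚ_[p]) = (2 : ℚ_[p]) := by norm_num
        rw [← h2] at hlt
        have := (Padic.norm_intCast_lt_one_iff (k := 2)).1 hlt
        have := Int.le_of_dvd (by norm_num) this
        omega
    have h4n : ‖(4 : ℚ_[p])‖ = 1 := by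
      have e : (4 : ℚ_[p]) = 2 * 2 := by norm_num
      rw [e, norm_mul, h2n]; norm_num
    have ht1 : ‖t‖ ≤ 1 ∨ 1 < ‖t‖ := le_or_gt _ _
    -- prove valuation of t is even
    have heven : Even t.valuation := by
      rcases lt_trichotomy ‖t‖ 1 with hlt | heq | hgt
      · have hvs : s.valuation = 0 := by
          have e : s = 1 + (t ^ 2 + 4 * t) := by rw [hsdef]; ring
          have hb : ‖t ^ 2 + 4 * t‖ < ‖(1:ℚ_[p])‖ := by
            rw [norm_one]
            refine lt_of_le_of_lt (Padic.nonarchimedean _ _) ?_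
            rw [norm_pow, norm_mul, h4n, one_mul]
            refine max_lt ?_ hlt
            calc ‖t‖ ^ 2 ≤ ‖t‖ * 1 := by nlinarith [norm_nonneg t]
              _ < 1 := by linarith
          rw [e, val_add_eq _ one_ne_zero hb, Padic.valuation_one]
        rcases Int.even_or_odd t.valuation with he | ho
        · exact he
        · exfalso; obtain ⟨m, hm⟩ := ho; omega
      · have : t.valuation = 0 := by
          have := val_eq_of_norm_eq ht0 (one_ne_zero : (1:ℚ_[p]) ≠ 0)
            (by rw [heq, norm_one])
          rw [this, Padic.valuation_one]
        rw [this]; exact Even.zero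
      · have hvs : s.valuation = 2 * t.valuation := by
          have e : s = t ^ 2 + (4 * t + 1) := by rw [hsdef]; ring
          have hb : ‖4 * t + 1‖ < ‖t ^ 2‖ := by
            rw [norm_pow]
            refine lt_of_le_of_lt (Padic.nonarchimedean _ _) ?_
            rw [norm_mul, h4n, one_mul, norm_one]
            refine max_lt ?_ ?_
            · nlinarith [norm_nonneg t]
            · nlinarith [norm_nonneg t]
          rw [e, val_add_eq _ (by exact pow_ne_zero 2 ht0) hb,
            show t ^ 2 = t * t by ring, Padic.valuation_mul ht0 ht0]
          ring
        rcases Int.even_or_odd t.valuation with he | ho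
        · exact he
        · exfalso; obtain ⟨m, hm⟩ := ho; omega
    obtain ⟨m, hm⟩ := heven
    have hπ0 : ((p:ℚ_[p])) ≠ 0 := by
      exact_mod_cast Nat.cast_ne_zero.2 (Fact.out : p.Prime).ne_zero
    set π : ℚ_[p] := (p : ℚ_[p]) with hπ
    set u : ℚ_[p] := t * π ^ (-(2 * m)) with hu
    have hπn : ‖π‖ = ((p:ℝ))⁻¹ := Padic.norm_p
    have hun : ‖u‖ = 1 := by
      have hppos : (0:ℝ) < p := by positivity
      rw [hu, norm_mul, norm_zpow, hπn, Padic.norm_eq_zpow_neg_valuation ht0, hm]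
      rw [inv_zpow, ← zpow_neg, neg_neg, ← zpow_add₀ (ne_of_gt hppos),
        show -(m + m) + 2 * m = 0 from by ring, zpow_zero]
    have hu1 : ‖u‖ ≤ 1 := hun.le
    obtain ⟨a, b, hab⟩ := padic_unit_sq_add_sq p hp2 ⟨u, hu1⟩ (by
      exact hun)
    have hcoe : u = (a : ℚ_[p]) ^ 2 + (b : ℚ_[p]) ^ 2 := by
      have := congrArg (fun z : ℤ_[p] => (z : ℚ_[p])) hab
      simpa using this
    refine ⟨(a : ℚ_[p]) * π ^ m, (b : ℚ_[p]) * π ^ m, ?_⟩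
    have hkey : t = u * π ^ (2 * m) := by
      rw [hu, mul_assoc, ← zpow_add₀ hπ0,
        show -(2 * m) + 2 * m = 0 from by ring, zpow_zero, mul_one]
    have hππ : π ^ (2 * m) = π ^ m * π ^ m := by
      rw [← zpow_add₀ hπ0]; ring_nf
    rw [hkey, hcoe, hππ]
    ring
end

section
/- Let x, y ∈ ℚ satisfy y² = (x² − 3)(x − 2) with y ≠ 0. Then x − 2 is a sum of two squares of rational numbers; in particular x > 2. -/
lemma aux3_nat (n : ℕ) : ∀ w u v : ℤ, w.natAbs = n → u^2 + v^2 = 3*w^2 → w = 0 := by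
  induction n using Nat.strong_induction_on with
  | _ n ih =>
    intro w u v hwn h
    rcases eq_or_ne w 0 with h0 | h0
    · exact h0
    have key : ∀ a b : ZMod 3, a^2 + b^2 = 0 → a = 0 ∧ b = 0 := by decide
    have h30 : (3 : ZMod 3) = 0 := by decide
    have h3 : ((u : ZMod 3))^2 + ((v : ZMod 3))^2 = 0 := by
      have := congrArg (fun z : ℤ => (z : ZMod 3)) h
      push_cast at this
      rw [h30] at this
      simpa using this
    obtain ⟨hu0, hv0⟩ := key _ _ h3
    obtain ⟨u', rfl⟩ := (ZMod.intCast_zmod_eq_zero_iff_dvd u 3).mp hu0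
    obtain ⟨v', rfl⟩ := (ZMod.intCast_zmod_eq_zero_iff_dvd v 3).mp hv0
    push_cast at h
    have hw2 : (3:ℤ) ∣ w^2 := ⟨u'^2 + v'^2, by linarith⟩
    have hw : (3:ℤ) ∣ w := Int.Prime.dvd_pow' Nat.prime_three hw2
    obtain ⟨w', rfl⟩ := hw
    have h' : u'^2 + v'^2 = 3*w'^2 := by nlinarith [h]
    have hw'0 : w' = 0 := by
      refine ih w'.natAbs ?_ w' u' v' rfl h'
      have hw'ne : w' ≠ 0 := by rintro rfl; simp at h0
      have h1 : w'.natAbs ≥ 1 := Nat.one_le_iff_ne_zero.mpr (Int.natAbs_ne_zero.mpr hw'ne)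
      have h2 : ((3:ℤ) * w').natAbs = 3 * w'.natAbs := by
        simp [Int.natAbs_mul]
      omega
    simp [hw'0]

lemma aux3 (w u v : ℤ) (h : u^2 + v^2 = 3*w^2) : w = 0 :=
  aux3_nat w.natAbs w u v rfl h

/-- Let `x, y ∈ ℚ` satisfy `y² = (x² − 3)(x − 2)` with `y ≠ 0`. Then `x − 2` is a sum of
two squares of rational numbers; in particular `x > 2`. -/
theorem stmt14 (x y : ℚ) (h : y ^ 2 = (x ^ 2 - 3) * (x - 2)) (hy : y ≠ 0) :
    (∃ a b : ℚ, x - 2 = a ^ 2 + b ^ 2) ∧ 2 < x := by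
  set t : ℚ := x - 2 with ht_def
  have ht : y^2 = t^3 + 4*t^2 + t := by rw [h]; ring
  have ht0 : t ≠ 0 := by
    intro h0
    rw [h0] at ht
    apply hy
    have h1 : y^2 = 0 := by rw [ht]; ring
    exact pow_eq_zero_iff two_ne_zero |>.mp h1
  set m : ℤ := t.num with hm_def
  set n : ℤ := (t.den : ℤ) with hn_def
  have hn0 : 0 < n := by positivity
  have hnQ : (n:ℚ) ≠ 0 := by positivity
  have htn : t * (n:ℚ) = (m:ℚ) := by
    rw [hm_def, hn_def]
    push_cast
    exact_mod_cast Rat.mul_den_eq_num t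
  have hm0 : m ≠ 0 := Rat.num_ne_zero.mpr ht0
  set S : ℤ := m^2 + 4*m*n + n^2 with hS_def
  set M : ℤ := m * S with hM_def
  set N : ℤ := n^3 with hN_def
  have hN0 : 0 < N := by positivity
  have hMN : y^2 = (M:ℚ)/(N:ℚ) := by
    rw [eq_div_iff (by positivity), hM_def, hS_def, hN_def]
    push_cast
    linear_combination ((n:ℚ))^3 * ht +
      ((t*n)^2 + t*n*m + (m:ℚ)^2 + 4*n*(t*n+m) + n^2) * htn
  have hcop : IsCoprime m n := by
    rw [Int.isCoprime_iff_gcd_eq_one]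
    exact t.reduced
  have hcopSn : IsCoprime S n := by
    have h1 : S = m^2 + n*(4*m+n) := by rw [hS_def]; ring
    rw [h1]
    exact (hcop.pow_left).add_mul_left_left _
  have hcopmS : IsCoprime m S := by
    have h1 : S = n^2 + m*(m+4*n) := by rw [hS_def]; ring
    rw [h1]
    exact (hcop.pow_right).add_mul_left_right _
  have hcopMN : IsCoprime M N := (hcop.mul_left hcopSn).pow_right
  have hcopMN' : Nat.Coprime M.natAbs N.natAbs := Int.isCoprime_iff_gcd_eq_one.mp hcopMN
  have hnum : (y^2).num = M := by rw [hMN]; exact Rat.num_div_eq_of_coprime hN0 hcopMN'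
  have hden : ((y^2).den : ℤ) = N := by
    rw [hMN]; exact_mod_cast Rat.den_div_eq_of_coprime hN0 hcopMN'
  set P : ℤ := y.num with hP_def
  have hP : P^2 = M := by
    rw [← hnum, sq, sq, Rat.mul_self_num]
  obtain ⟨a, ha⟩ := Int.sq_of_isCoprime hcopmS (show m * S = P^2 by rw [hP, hM_def])
  rcases ha with ha | ha
  · -- m = a^2 : then t is a rational square
    have hden2 : n^3 = ((y.den : ℤ))^2 := by
      rw [← hN_def, ← hden, sq, sq, Rat.mul_self_den]
      push_cast
      ring
    have h2 : ((t.den:ℤ))^2 ∣ ((y.den:ℤ))^2 := by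
      rw [← hden2, hn_def]
      exact ⟨(t.den:ℤ), by ring⟩
    have hdvd : t.den ∣ y.den := (Nat.pow_dvd_pow_iff two_ne_zero).mp (by exact_mod_cast h2)
    obtain ⟨e, he⟩ := hdvd
    have hyden : ((y.den:ℤ)) = (t.den:ℤ) * e := by exact_mod_cast he
    have htden : (t.den : ℤ) = (e:ℤ)^2 := by
      have h3 : ((t.den:ℤ))^3 = ((t.den:ℤ))^2 * (e:ℤ)^2 :=
        calc ((t.den:ℤ))^3 = n^3 := by rw [hn_def]
          _ = ((y.den:ℤ))^2 := hden2
          _ = ((t.den:ℤ))^2 * (e:ℤ)^2 := by rw [hyden]; ring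
      have hd0 : ((t.den:ℤ))^2 ≠ 0 := by positivity
      exact mul_left_cancel₀ hd0 (by linear_combination h3)
    have he0 : (e:ℚ) ≠ 0 := by
      intro h0
      have he' : e = 0 := by exact_mod_cast h0
      rw [he', Nat.mul_zero] at he
      exact (Rat.den_ne_zero y) he
    have htsq : t = ((a:ℚ)/(e:ℚ))^2 := by
      have hnum' : ((t.num:ℚ)) = (a:ℚ)^2 := by rw [← hm_def]; exact_mod_cast ha
      have hden' : ((t.den:ℚ)) = (e:ℚ)^2 := by exact_mod_cast htden
      rw [← Rat.num_div_den t, hnum', hden', div_pow]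
    have haQ : (a:ℚ)/(e:ℚ) ≠ 0 := by
      intro h0
      rw [htsq, h0] at ht0
      simp at ht0
    have htpos : 0 < t := by rw [htsq]; positivity
    refine ⟨⟨(a:ℚ)/(e:ℚ), 0, by rw [htsq]; ring⟩, ?_⟩
    rw [ht_def] at htpos
    linarith
  · -- m = -a^2 : contradiction
    exfalso
    have ha0 : a ≠ 0 := by rintro rfl; rw [ha] at hm0; simp at hm0
    have hadvd : a ∣ P := by
      have h1 : a^2 ∣ P^2 := ⟨-S, by rw [hP, hM_def, ha]; ring⟩
      exact (Int.pow_dvd_pow_iff two_ne_zero).mp h1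
    obtain ⟨b, hb⟩ := hadvd
    have hSb : S = -b^2 := by
      have h2 := hP
      rw [hM_def, ha, hb] at h2
      have h1 : a^2 * S = a^2 * (-b^2) := by linear_combination h2
      exact mul_left_cancel₀ (pow_ne_zero 2 ha0) h1
    have key : (m + 2*n)^2 + b^2 = 3*n^2 := by
      have h1 : (m+2*n)^2 = S + 3*n^2 := by rw [hS_def]; ring
      rw [h1, hSb]; ring
    have := aux3 n (m+2*n) b key
    omega
end
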